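/- arXiv:2402.18744 — 4 statements merged into one kernel-verified Lean document; each statement's English description precedes it below -/
import Mathlib

section
/- Let n ≥ 1, and let ν̃, k₁, η̃max be real numbers with 0 < η̃max < k₁ and ν̃ > 0. For every e ∈ ℝⁿ with ‖e‖ > η̃max·ν̃/k₁, it holds that η̃max·‖e‖ − k₁·⟨e, sat(e, ν̃)⟩ < 0. -/
open scoped RealInnerProductSpace

noncomputable def sat {n : ℕ} (x : EuclideanSpace ℝ (Fin n)) (c : ℝ) :
    EuclideanSpace ℝ (Fin n) :=
  if ‖x‖ ≤ c then c⁻¹ • x else ‖x‖⁻¹ • x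

theorem stmt2 {n : ℕ} (hn : 1 ≤ n) (ν k₁ ηmax : ℝ)
    (hη : 0 < ηmax) (hk : ηmax < k₁) (hν : 0 < ν)
    (e : EuclideanSpace ℝ (Fin n)) (he : ηmax * ν / k₁ < ‖e‖) :
    ηmax * ‖e‖ - k₁ * ⟪e, sat e ν⟫ < 0 := by
  have hk0 : (0:ℝ) < k₁ := hη.trans hk
  have he0 : 0 < ‖e‖ := lt_of_le_of_lt (by positivity) he
  unfold sat
  split_ifs with h
  · rw [real_inner_smul_right, real_inner_self_eq_norm_sq]
    have : ηmax * ν < k₁ * ‖e‖ := by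
      have := (div_lt_iff₀ hk0).mp he
      linarith [this]
    have h2 : ηmax * ν * ‖e‖ < k₁ * ‖e‖ * ‖e‖ := by nlinarith
    rw [sub_neg, show k₁ * (ν⁻¹ * ‖e‖ ^ 2) = k₁ * ‖e‖ * ‖e‖ / ν by field_simp,
      lt_div_iff₀ hν]
    nlinarith
  · rw [real_inner_smul_right, real_inner_self_eq_norm_sq]
    have : ‖e‖⁻¹ * ‖e‖ ^ 2 = ‖e‖ := by field_simp
    rw [this]
    nlinarith
end

section
/- Let n ≥ 1, and let ν̃, k₁, η̃max be real numbers with 0 < η̃max < k₁ and ν̃ > 0. For all vectors e, η̃ ∈ ℝⁿ with ‖η̃‖ ≤ η̃max and ‖e‖ ≥ η̃max·ν̃/k₁, it holds that −⟨e, η̃⟩ − k₁·⟨e, sat(e, ν̃)⟩ ≤ 0. -/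
open scoped RealInnerProductSpace

theorem stmt3 {n : ℕ} (hn : 1 ≤ n) (ν k₁ ηmax : ℝ)
    (hη : 0 < ηmax) (hk : ηmax < k₁) (hν : 0 < ν)
    (e η : EuclideanSpace ℝ (Fin n)) (hηb : ‖η‖ ≤ ηmax)
    (he : ηmax * ν / k₁ ≤ ‖e‖) :
    -⟪e, η⟫ - k₁ * ⟪e, sat e ν⟫ ≤ 0 := by
  have hk0 : 0 < k₁ := hη.trans hk
  have h1 : -⟪e, η⟫ ≤ ηmax * ‖e‖ := by
    have := abs_real_inner_le_norm e η
    have hb : ‖e‖ * ‖η‖ ≤ ‖e‖ * ηmax :=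
      mul_le_mul_of_nonneg_left hηb (norm_nonneg e)
    nlinarith [neg_abs_le ⟪e, η⟫]
  have h2 : ηmax * ‖e‖ ≤ k₁ * ⟪e, sat e ν⟫ := by
    unfold sat
    split_ifs with h
    · rw [real_inner_smul_right, real_inner_self_eq_norm_sq]
      have hle : ηmax * ν ≤ k₁ * ‖e‖ := by
        rw [div_le_iff₀ hk0] at he; linarith
      have key := mul_le_mul_of_nonneg_left hle (norm_nonneg e)
      rw [mul_comm ν⁻¹, ← div_eq_mul_inv, mul_div_assoc', le_div_iff₀ hν]
      nlinarith
    · push_neg at h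
      have he0 : 0 < ‖e‖ := hν.trans h
      rw [real_inner_smul_right, real_inner_self_eq_norm_sq]
      rw [pow_two, inv_mul_cancel_left₀ he0.ne']
      exact mul_le_mul_of_nonneg_right hk.le he0.le
  linarith
end

section
/- Let n, N ≥ 1 and k₁, L, ν̃, η̃max > 0. Let c : ℝ^{nN} → ℝⁿ be Lipschitz continuous with constant L. Let a ≤ b, let x : [a, b] → ℝ^{nN} and x_p : [a, b] → ℝⁿ be differentiable with ‖x′(t)‖ ≤ k₁·√N and ‖x_p′(t)‖ ≤ k₁ for all t ∈ [a, b], and define e(t) := c(x(t)) − x_p(t) and the sample-and-hold error η̃(t) := k₁·sat(e(a), ν̃) − k₁·sat(e(t), ν̃). If the dwell time satisfies b − a ≤ η̃max·ν̃/(k₁²·(L·√N + 1)), then ‖η̃(t)‖ ≤ η̃max for all t ∈ [a, b]. -/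
lemma sat_eq_max {n : ℕ} (x : EuclideanSpace ℝ (Fin n)) (c : ℝ) :
    sat x c = (max ‖x‖ c)⁻¹ • x := by
  unfold sat
  split_ifs with h
  · rw [max_eq_right h]
  · rw [max_eq_left (le_of_not_ge h)]

lemma smul_norm_min {X c : ℝ} (hc : 0 < c) (hX : 0 ≤ X) :
    c / max X c * X = min X c := by
  rcases le_or_gt X c with h | h
  · rw [max_eq_right h, min_eq_left h, div_self hc.ne', one_mul]
  · rw [max_eq_left h.le, min_eq_right h.le]
    exact div_mul_cancel₀ c (hc.trans h).ne'

lemma sat_lipschitz {n : ℕ} {c : ℝ} (hc : 0 < c) (x y : EuclideanSpace ℝ (Fin n)) :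
    ‖sat x c - sat y c‖ ≤ c⁻¹ * ‖x - y‖ := by
  set s : ℝ := c / max ‖x‖ c with hs
  set t : ℝ := c / max ‖y‖ c with ht
  have hax : (0:ℝ) < max ‖x‖ c := lt_max_of_lt_right hc
  have hay : (0:ℝ) < max ‖y‖ c := lt_max_of_lt_right hc
  have key : ‖s • x - t • y‖ ≤ ‖x - y‖ := by
    have hsX : s * ‖x‖ = min ‖x‖ c := smul_norm_min hc (norm_nonneg x)
    have htY : t * ‖y‖ = min ‖y‖ c := smul_norm_min hc (norm_nonneg y)
    have hmin : |min ‖x‖ c - min ‖y‖ c| ≤ |‖x‖ - ‖y‖| := by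
      rcases le_total ‖x‖ c with h1 | h1 <;> rcases le_total ‖y‖ c with h2 | h2 <;>
        simp [min_eq_left, min_eq_right, h1, h2, abs_le] <;>
        cases' abs_cases (‖x‖ - ‖y‖) with h h <;> constructor <;> nlinarith
    have hs1 : s ≤ 1 := by
      rw [hs, div_le_one hax]; exact le_max_right _ _
    have ht1 : t ≤ 1 := by
      rw [ht, div_le_one hay]; exact le_max_right _ _
    have hs0 : 0 ≤ s := le_of_lt (div_pos hc hax)
    have ht0 : 0 ≤ t := le_of_lt (div_pos hc hay)
    have hinner : (inner ℝ x y : ℝ) ≤ ‖x‖ * ‖y‖ := real_inner_le_norm x y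
    have e1 : ‖s • x - t • y‖ ^ 2 = s^2 * ‖x‖^2 - 2 * (s * t * (inner ℝ x y : ℝ)) + t^2 * ‖y‖^2 := by
      rw [norm_sub_sq_real, real_inner_smul_left, real_inner_smul_right, norm_smul, norm_smul]
      simp [Real.norm_eq_abs, abs_of_nonneg hs0, abs_of_nonneg ht0]
      ring
    have e2 : ‖x - y‖ ^ 2 = ‖x‖^2 - 2 * (inner ℝ x y : ℝ) + ‖y‖^2 := norm_sub_sq_real x y
    have hsq : ‖s • x - t • y‖ ^ 2 ≤ ‖x - y‖ ^ 2 := by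
      rw [e1, e2]
      have habs : (min ‖x‖ c - min ‖y‖ c)^2 ≤ (‖x‖ - ‖y‖)^2 := by
        rw [← sq_abs, ← sq_abs (‖x‖ - ‖y‖)]
        exact pow_le_pow_left₀ (abs_nonneg _) hmin 2
      rw [← hsX, ← htY] at habs
      have hst : (0:ℝ) ≤ 1 - s * t := by nlinarith
      have hIxy : (0:ℝ) ≤ ‖x‖ * ‖y‖ - (inner ℝ x y : ℝ) := by linarith
      nlinarith [mul_nonneg hst hIxy]
    exact le_of_pow_le_pow_left₀ two_ne_zero (norm_nonneg _) hsq
  have hrw : sat x c - sat y c = c⁻¹ • (s • x - t • y) := by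
    rw [sat_eq_max, sat_eq_max, smul_sub, smul_smul, smul_smul, hs, ht]
    congr 2 <;> field_simp
  rw [hrw, norm_smul, Real.norm_eq_abs, abs_of_nonneg (inv_nonneg.mpr hc.le)]
  exact mul_le_mul_of_nonneg_left key (inv_nonneg.mpr hc.le)

theorem stmt9 {n N : ℕ} (hn : 1 ≤ n) (hN : 1 ≤ N) (k₁ L ν ηmax : ℝ)
    (hk : 0 < k₁) (hL : 0 < L) (hν : 0 < ν) (hηmax : 0 < ηmax)
    (c : EuclideanSpace ℝ (Fin (n * N)) → EuclideanSpace ℝ (Fin n))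
    (hc : ∀ a b, ‖c a - c b‖ ≤ L * ‖a - b‖)
    (a b : ℝ) (hab : a ≤ b)
    (x : ℝ → EuclideanSpace ℝ (Fin (n * N))) (x' : ℝ → EuclideanSpace ℝ (Fin (n * N)))
    (xp : ℝ → EuclideanSpace ℝ (Fin n)) (xp' : ℝ → EuclideanSpace ℝ (Fin n))
    (hx : ∀ t ∈ Set.Icc a b, HasDerivWithinAt x (x' t) (Set.Icc a b) t)
    (hxp : ∀ t ∈ Set.Icc a b, HasDerivWithinAt xp (xp' t) (Set.Icc a b) t)
    (hx' : ∀ t ∈ Set.Icc a b, ‖x' t‖ ≤ k₁ * Real.sqrt N)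
    (hxp' : ∀ t ∈ Set.Icc a b, ‖xp' t‖ ≤ k₁)
    (e : ℝ → EuclideanSpace ℝ (Fin n)) (he : ∀ t, e t = c (x t) - xp t)
    (η : ℝ → EuclideanSpace ℝ (Fin n))
    (hη : ∀ t, η t = k₁ • sat (e a) ν - k₁ • sat (e t) ν)
    (hdwell : b - a ≤ ηmax * ν / (k₁ ^ 2 * (L * Real.sqrt N + 1))) :
    ∀ t ∈ Set.Icc a b, ‖η t‖ ≤ ηmax := by

  intro t ht
  obtain ⟨hta, htb⟩ := ht
  have ha : a ∈ Set.Icc a b := ⟨le_refl a, hab⟩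
  have hxbound : ‖x t - x a‖ ≤ k₁ * Real.sqrt N * (b - a) := by
    have := (convex_Icc a b).norm_image_sub_le_of_norm_hasDerivWithin_le hx hx' ha ⟨hta, htb⟩
    calc ‖x t - x a‖ ≤ k₁ * Real.sqrt N * ‖t - a‖ := this
      _ ≤ k₁ * Real.sqrt N * (b - a) := by
          apply mul_le_mul_of_nonneg_left _ (by positivity)
          rw [Real.norm_eq_abs, abs_of_nonneg (by linarith)]; linarith
  have hxpbound : ‖xp t - xp a‖ ≤ k₁ * (b - a) := by
    have := (convex_Icc a b).norm_image_sub_le_of_norm_hasDerivWithin_le hxp hxp' ha ⟨hta, htb⟩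
    calc ‖xp t - xp a‖ ≤ k₁ * ‖t - a‖ := this
      _ ≤ k₁ * (b - a) := by
          apply mul_le_mul_of_nonneg_left _ hk.le
          rw [Real.norm_eq_abs, abs_of_nonneg (by linarith)]; linarith
  have hebound : ‖e a - e t‖ ≤ (L * (k₁ * Real.sqrt N) + k₁) * (b - a) := by
    rw [he a, he t]
    have h1 : c (x a) - xp a - (c (x t) - xp t) = (c (x a) - c (x t)) - (xp a - xp t) := by
      abel
    rw [h1]
    have h2 : ‖(c (x a) - c (x t)) - (xp a - xp t)‖ ≤ ‖c (x a) - c (x t)‖ + ‖xp a - xp t‖ :=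
      norm_sub_le _ _
    have h3 : ‖c (x a) - c (x t)‖ ≤ L * ‖x a - x t‖ := hc _ _
    rw [norm_sub_rev (x a), norm_sub_rev (xp a)] at *
    nlinarith [hc (x a) (x t)]
  have hsat : ‖sat (e a) ν - sat (e t) ν‖ ≤ ν⁻¹ * ‖e a - e t‖ := sat_lipschitz hν _ _
  have hη' : ‖η t‖ = k₁ * ‖sat (e a) ν - sat (e t) ν‖ := by
    rw [hη t, ← smul_sub, norm_smul, Real.norm_eq_abs, abs_of_pos hk]
  have hden : 0 < k₁ ^ 2 * (L * Real.sqrt N + 1) := by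
    have : (0:ℝ) < Real.sqrt N := Real.sqrt_pos.mpr (by exact_mod_cast Nat.lt_of_lt_of_le Nat.zero_lt_one hN)
    positivity
  have key : ‖η t‖ ≤ k₁ * (ν⁻¹ * ((L * (k₁ * Real.sqrt N) + k₁) * (b - a))) := by
    rw [hη']
    apply mul_le_mul_of_nonneg_left _ hk.le
    calc ‖sat (e a) ν - sat (e t) ν‖ ≤ ν⁻¹ * ‖e a - e t‖ := hsat
      _ ≤ ν⁻¹ * ((L * (k₁ * Real.sqrt N) + k₁) * (b - a)) := by
          exact mul_le_mul_of_nonneg_left hebound (inv_nonneg.mpr hν.le)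
  have hfinal : k₁ * (ν⁻¹ * ((L * (k₁ * Real.sqrt N) + k₁) * (b - a))) ≤ ηmax := by
    have h4 : (b - a) * (k₁ ^ 2 * (L * Real.sqrt N + 1)) ≤ ηmax * ν := by
      rw [← le_div_iff₀ hden] at *
      linarith [hdwell]
    have h5 : k₁ * (ν⁻¹ * ((L * (k₁ * Real.sqrt N) + k₁) * (b - a)))
        = (b - a) * (k₁ ^ 2 * (L * Real.sqrt N + 1)) / ν := by
      field_simp
    rw [h5, div_le_iff₀ hν]
    nlinarith
  linarith
end

section
/- Let D ⊆ ℝⁿ be a compact convex set with nonempty interior, let φ : D → ℝ be continuous with φ(z) > 0 for all z ∈ D, let N ≥ 2, and let x = (x₁, …, x_N) ∈ (int D)ᴺ have pairwise distinct components. Then the locational cost L(y) := Σ_{p=1}^N ∫_{V_p(y)} ‖y_p − z‖²·φ(z) dz is differentiable at x, and for each q its partial derivative with respect to the q-th component is the linear functional v ↦ ∫_{V_q(x)} 2·⟨x_q − z, v⟩·φ(z) dz = 2·m_q(x)·⟨x_q − c_q(x), v⟩, where m_q(x) := ∫_{V_q(x)} φ(z) dz and c_q(x) := (∫_{V_q(x)}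 z·φ(z) dz)/m_q(x). -/
open MeasureTheory
open scoped RealInnerProductSpace

/-- The Voronoi cell of agent `p` in workspace `D` for configuration `y`. -/
def VCell {n N : ℕ} (D : Set (EuclideanSpace ℝ (Fin n)))
    (y : Fin N → EuclideanSpace ℝ (Fin n)) (p : Fin N) : Set (EuclideanSpace ℝ (Fin n)) :=
  {z ∈ D | ∀ r : Fin N, r ≠ p → ‖y p - z‖ ≤ ‖y r - z‖}

/-- The locational cost of configuration `y` over workspace `D` with density `φ`. -/
noncomputable def locCost {n N : ℕ} (D : Set (EuclideanSpace ℝ (Fin n)))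
    (φ : EuclideanSpace ℝ (Fin n) → ℝ) (y : Fin N → EuclideanSpace ℝ (Fin n)) : ℝ :=
  ∑ p : Fin N, ∫ z in VCell D y p, ‖y p - z‖ ^ 2 * φ z

/-- The mass of agent `q`'s Voronoi cell. -/
noncomputable def vMass {n N : ℕ} (D : Set (EuclideanSpace ℝ (Fin n)))
    (φ : EuclideanSpace ℝ (Fin n) → ℝ) (x : Fin N → EuclideanSpace ℝ (Fin n))
    (q : Fin N) : ℝ :=
  ∫ z in VCell D x q, φ z

/-- The centroid of agent `q`'s Voronoi cell. -/
noncomputable def vCentroid {n N : ℕ} (D : Set (EuclideanSpace ℝ (Fin n)))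
    (φ : EuclideanSpace ℝ (Fin n) → ℝ) (x : Fin N → EuclideanSpace ℝ (Fin n))
    (q : Fin N) : EuclideanSpace ℝ (Fin n) :=
  (vMass D φ x q)⁻¹ • ∫ z in VCell D x q, φ z • z

section Aux

open Set Metric

/-- A perpendicular bisector is a null set. -/
lemma stmt16_bisector_null {n : ℕ} (a b : EuclideanSpace ℝ (Fin n)) (hab : a ≠ b) :
    volume {z : EuclideanSpace ℝ (Fin n) | ‖a - z‖ = ‖b - z‖} = 0 := by
  have h : {z : EuclideanSpace ℝ (Fin n) | ‖a - z‖ = ‖b - z‖}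
      = (AffineSubspace.perpBisector a b : Set (EuclideanSpace ℝ (Fin n))) := by
    ext z
    simp only [mem_setOf_eq, SetLike.mem_coe, AffineSubspace.mem_perpBisector_iff_dist_eq,
      dist_eq_norm]
    rw [norm_sub_rev z a, norm_sub_rev z b]
  rw [h]
  exact Measure.addHaar_affineSubspace volume _
    (fun h' => hab (AffineSubspace.perpBisector_eq_top.mp h'))

lemma stmt16_abs_inf'_sub_inf'_le {ι : Type*} {s : Finset ι} (hs : s.Nonempty)
    (f g : ι → ℝ) {c : ℝ} (h : ∀ i ∈ s, |f i - g i| ≤ c) :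
    |s.inf' hs f - s.inf' hs g| ≤ c := by
  have key : ∀ f g : ι → ℝ, (∀ i ∈ s, |f i - g i| ≤ c) →
      s.inf' hs f - s.inf' hs g ≤ c := by
    intro f g h
    obtain ⟨j, hj, hjg⟩ := s.exists_mem_eq_inf' hs g
    have h1 : s.inf' hs f ≤ f j := Finset.inf'_le _ hj
    have h2 : |f j - g j| ≤ c := h j hj
    rw [abs_sub_le_iff] at h2
    rw [hjg]; linarith [h2.1]
  rw [abs_sub_le_iff]
  exact ⟨key f g h, key g f fun i hi => by rw [abs_sub_comm]; exact h i hi⟩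

end Aux

set_option maxHeartbeats 1000000

theorem stmt16 {n N : ℕ} (hn : 1 ≤ n) (hN : 2 ≤ N)
    (D : Set (EuclideanSpace ℝ (Fin n))) (hDcomp : IsCompact D) (hDconv : Convex ℝ D)
    (hDint : (interior D).Nonempty)
    (φ : EuclideanSpace ℝ (Fin n) → ℝ) (hφ : ContinuousOn φ D)
    (hφpos : ∀ z ∈ D, 0 < φ z)
    (x : Fin N → EuclideanSpace ℝ (Fin n)) (hxD : ∀ p, x p ∈ interior D)
    (hdist : ∀ p q : Fin N, p ≠ q → x p ≠ x q) :
    DifferentiableAt ℝ (locCost D φ) x ∧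
      ∀ (q : Fin N) (v : EuclideanSpace ℝ (Fin n)),
        fderiv ℝ (locCost D φ) x (Pi.single q v) =
            ∫ z in VCell D x q, 2 * ⟪x q - z, v⟫ * φ z ∧
          fderiv ℝ (locCost D φ) x (Pi.single q v) =
            2 * vMass D φ x q * ⟪x q - vCentroid D φ x q, v⟫ := by
  classical
  haveI : NeZero N := ⟨by omega⟩
  have hne : (Finset.univ : Finset (Fin N)).Nonempty := Finset.univ_nonempty
  have hDmeas : MeasurableSet D := hDcomp.measurableSet
  -- the integrand as a function of the configuration
  set F : (Fin N → EuclideanSpace ℝ (Fin n)) → EuclideanSpace ℝ (Fin n) → ℝ :=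
    fun y z => (Finset.univ.inf' hne fun p => ‖y p - z‖ ^ 2) * φ z with hF
  -- Voronoi cells are closed, hence measurable
  have hVclosed : ∀ (y : Fin N → EuclideanSpace ℝ (Fin n)) (p : Fin N),
      IsClosed (VCell D y p) := by
    intro y p
    have : VCell D y p = D ∩ ⋂ r, ⋂ (_ : r ≠ p), {z | ‖y p - z‖ ≤ ‖y r - z‖} := by
      ext z; simp [VCell, Set.mem_iInter]
    rw [this]
    exact hDcomp.isClosed.inter (isClosed_iInter fun r => isClosed_iInter fun _ =>
      isClosed_le ((continuous_const.sub continuous_id).norm)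
        ((continuous_const.sub continuous_id).norm))
  have hVmeas : ∀ (y : Fin N → EuclideanSpace ℝ (Fin n)) (p : Fin N),
      MeasurableSet (VCell D y p) := fun y p => (hVclosed y p).measurableSet
  have hVsub : ∀ (y : Fin N → EuclideanSpace ℝ (Fin n)) (p : Fin N),
      VCell D y p ⊆ D := fun y p z hz => hz.1
  -- rewrite of locCost for configurations with pairwise-distinct components
  have hZgen : ∀ y : Fin N → EuclideanSpace ℝ (Fin n), (∀ p r, p ≠ r → y p ≠ y r) →
      volume {z : EuclideanSpace ℝ (Fin n) |
        ∃ p r : Fin N, p ≠ r ∧ ‖y p - z‖ = ‖y r - z‖} = 0 := by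
    intro y hy
    have hsub : {z : EuclideanSpace ℝ (Fin n) | ∃ p r, p ≠ r ∧ ‖y p - z‖ = ‖y r - z‖}
        ⊆ ⋃ p : Fin N, ⋃ r : Fin N, {z | p ≠ r ∧ ‖y p - z‖ = ‖y r - z‖} := by
      rintro z ⟨p, r, h1, h2⟩
      exact Set.mem_iUnion.2 ⟨p, Set.mem_iUnion.2 ⟨r, h1, h2⟩⟩
    refine measure_mono_null hsub ?_
    refine measure_iUnion_null fun p => measure_iUnion_null fun r => ?_
    by_cases hpr : p = r
    · have : {z : EuclideanSpace ℝ (Fin n) | p ≠ r ∧ ‖y p - z‖ = ‖y r - z‖} = ∅ := by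
        ext z; simp [hpr]
      simp [this]
    · exact measure_mono_null (fun z hz => hz.2) (stmt16_bisector_null _ _ (hy p r hpr))
  have hloc : ∀ y : Fin N → EuclideanSpace ℝ (Fin n), (∀ p r, p ≠ r → y p ≠ y r) →
      locCost D φ y = ∫ z in D, F y z := by
    intro y hy
    have hint : ∀ p : Fin N, IntegrableOn (fun z => ‖y p - z‖ ^ 2 * φ z) D := fun p =>
      ((((continuous_const.sub continuous_id).norm.pow 2).continuousOn).mul hφ).integrableOn_compact
        hDcomp
    have hZ := hZgen y hy
    have hae : ∀ᵐ z ∂(volume.restrict D),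
        (∑ p : Fin N, Set.indicator (VCell D y p) (fun z => ‖y p - z‖ ^ 2 * φ z) z) = F y z := by
      rw [ae_restrict_iff' hDmeas]
      filter_upwards [measure_eq_zero_iff_ae_notMem.mp hZ] with z hz hzD
      obtain ⟨p₀, -, hmin⟩ := Finset.exists_min_image Finset.univ (fun p => ‖y p - z‖) hne
      have hstrict : ∀ r, r ≠ p₀ → ‖y p₀ - z‖ < ‖y r - z‖ := fun r hr =>
        lt_of_le_of_ne (hmin r (Finset.mem_univ r)) fun he => hz ⟨p₀, r, Ne.symm hr, he⟩
      have hmem : z ∈ VCell D y p₀ := ⟨hzD, fun r hr => (hstrict r hr).le⟩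
      have hnot : ∀ r, r ≠ p₀ → z ∉ VCell D y r := fun r hr hzr =>
        absurd (hzr.2 p₀ (Ne.symm hr)) (not_le.mpr (hstrict r hr))
      rw [Finset.sum_eq_single p₀
        (fun r _ hr => Set.indicator_of_notMem (hnot r hr) _)
        (fun h => absurd (Finset.mem_univ p₀) h),
        Set.indicator_of_mem hmem]
      have hinf : (Finset.univ.inf' hne fun p => ‖y p - z‖ ^ 2) = ‖y p₀ - z‖ ^ 2 := by
        refine le_antisymm (Finset.inf'_le _ (Finset.mem_univ p₀)) ?_
        exact Finset.le_inf' _ _ fun r _ =>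
          pow_le_pow_left₀ (norm_nonneg _) (hmin r (Finset.mem_univ r)) 2
      rw [hF]; dsimp only; rw [hinf]
    calc locCost D φ y
        = ∑ p : Fin N, ∫ z in D,
            Set.indicator (VCell D y p) (fun z => ‖y p - z‖ ^ 2 * φ z) z := by
          simp only [locCost]
          refine Finset.sum_congr rfl fun p _ => ?_
          rw [setIntegral_indicator (hVmeas y p),
            Set.inter_eq_self_of_subset_right (hVsub y p)]
      _ = ∫ z in D, ∑ p : Fin N,
            Set.indicator (VCell D y p) (fun z => ‖y p - z‖ ^ 2 * φ z) z := by
          rw [integral_finset_sum]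
          exact fun p _ => (hint p).indicator (hVmeas y p)
      _ = ∫ z in D, F y z := integral_congr_ae hae
  -- bounding constants
  obtain ⟨R, hR⟩ : ∃ R, ∀ z ∈ D, ‖z‖ ≤ R := hDcomp.isBounded.exists_norm_le
  obtain ⟨z₀, hz₀⟩ := hDint
  have hR0 : 0 ≤ R := le_trans (norm_nonneg z₀) (hR z₀ (interior_subset hz₀))
  set C₀ : ℝ := Finset.univ.sup' hne fun p => ‖x p‖ with hC₀def
  have hC₀ : ∀ p, ‖x p‖ ≤ C₀ := fun p => Finset.le_sup' (fun p => ‖x p‖) (Finset.mem_univ p)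
  have hC₀0 : 0 ≤ C₀ := le_trans (norm_nonneg _) (hC₀ (Classical.arbitrary _))
  set K : ℝ := 2 * (C₀ + 1 + R) with hKdef
  have hK0 : 0 ≤ K := by rw [hKdef]; linarith
  -- the open "strict Voronoi" regions for the configuration x
  set A : Fin N → Set (EuclideanSpace ℝ (Fin n)) :=
    fun p => {z | ∀ r, r ≠ p → ‖x p - z‖ < ‖x r - z‖} with hAdef
  have hAopen : ∀ p, IsOpen (A p) := by
    intro p
    have : A p = ⋂ r, ⋂ (_ : r ≠ p), {z | ‖x p - z‖ < ‖x r - z‖} := by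
      ext z; simp [hAdef, Set.mem_iInter]
    rw [this]
    exact isOpen_iInter_of_finite fun r => isOpen_iInter_of_finite fun _ =>
      isOpen_lt ((continuous_const.sub continuous_id).norm)
        ((continuous_const.sub continuous_id).norm)
  -- the candidate derivative integrand
  set Pr : Fin N → ((Fin N → EuclideanSpace ℝ (Fin n)) →L[ℝ] EuclideanSpace ℝ (Fin n)) :=
    fun p => ContinuousLinearMap.proj p with hPrdef
  set Lf : Fin N → EuclideanSpace ℝ (Fin n) → ((Fin N → EuclideanSpace ℝ (Fin n)) →L[ℝ] ℝ) :=
    fun p z => (2 * φ z) • ((innerSL ℝ (x p - z)).comp (Pr p)) with hLfdef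
  set F' : EuclideanSpace ℝ (Fin n) → ((Fin N → EuclideanSpace ℝ (Fin n)) →L[ℝ] ℝ) :=
    fun z => ∑ p : Fin N, Set.indicator (A p) (Lf p) z with hF'def
  -- measurability facts
  have hF'meas : AEStronglyMeasurable F' (volume.restrict D) := by
    refine Finset.aestronglyMeasurable_fun_sum _ fun p _ => AEStronglyMeasurable.indicator ?_
      (hAopen p).measurableSet
    refine ContinuousOn.aestronglyMeasurable ?_ hDmeas
    refine ContinuousOn.smul (continuousOn_const.mul hφ) ?_
    exact (Continuous.clm_comp ((innerSL ℝ).continuous.comp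
      (continuous_const.sub continuous_id)) (continuous_const (y := Pr p))).continuousOn
  have hFcont : ∀ y : Fin N → EuclideanSpace ℝ (Fin n), ContinuousOn (F y) D := fun y =>
    ((Continuous.finset_inf'_apply hne fun p _ =>
      ((continuous_const.sub continuous_id).norm.pow 2)).continuousOn).mul hφ
  have hFmeas : ∀ᶠ y in nhds x, AEStronglyMeasurable (F y) (volume.restrict D) :=
    Filter.Eventually.of_forall fun y => (hFcont y).aestronglyMeasurable hDmeas
  have hFint : Integrable (F x) (volume.restrict D) := (hFcont x).integrableOn_compact hDcomp
  -- Lipschitz bound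
  have hbound_int : Integrable (fun z => K * |φ z|) (volume.restrict D) :=
    ((continuousOn_const.mul hφ.abs)).integrableOn_compact hDcomp
  have h_lip : ∀ᵐ z ∂(volume.restrict D),
      LipschitzOnWith (Real.nnabs (K * |φ z|)) (fun y => F y z) (Metric.ball x 1) := by
    rw [ae_restrict_iff' hDmeas]
    refine Filter.Eventually.of_forall fun z hzD => ?_
    rw [lipschitzOnWith_iff_dist_le_mul]
    intro y hy y' hy'
    have hcoe : ((Real.nnabs (K * |φ z|) : NNReal) : ℝ) = K * |φ z| := by
      rw [Real.coe_nnabs, abs_of_nonneg (by positivity)]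
    rw [Real.dist_eq, hcoe]
    have key : |(Finset.univ.inf' hne fun p => ‖y p - z‖ ^ 2) -
        (Finset.univ.inf' hne fun p => ‖y' p - z‖ ^ 2)| ≤ K * dist y y' := by
      refine stmt16_abs_inf'_sub_inf'_le hne _ _ fun p _ => ?_
      have hab : |‖y p - z‖ - ‖y' p - z‖| ≤ dist y y' := by
        refine le_trans (abs_norm_sub_norm_le _ _) ?_
        have h1 : y p - z - (y' p - z) = (y - y') p := by
          simp only [Pi.sub_apply]
          abel
        rw [h1, dist_eq_norm]
        exact norm_le_pi_norm (y - y') p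
      have haK : ‖y p - z‖ ≤ C₀ + 1 + R := by
        have h1 : ‖y p - z‖ ≤ ‖y p - x p‖ + ‖x p - z‖ := by
          calc ‖y p - z‖ = ‖(y p - x p) + (x p - z)‖ := by abel_nf
          _ ≤ ‖y p - x p‖ + ‖x p - z‖ := norm_add_le _ _
        have h2 : ‖y p - x p‖ ≤ 1 := by
          have := norm_le_pi_norm (y - x) p
          rw [Pi.sub_apply] at this
          have hlt : ‖y - x‖ < 1 := by rw [← dist_eq_norm]; exact Metric.mem_ball.mp hy
          linarith
        have h3 : ‖x p - z‖ ≤ C₀ + R :=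
          le_trans (norm_sub_le _ _) (add_le_add (hC₀ p) (hR z hzD))
        linarith
      have hbK : ‖y' p - z‖ ≤ C₀ + 1 + R := by
        have h1 : ‖y' p - z‖ ≤ ‖y' p - x p‖ + ‖x p - z‖ := by
          calc ‖y' p - z‖ = ‖(y' p - x p) + (x p - z)‖ := by abel_nf
          _ ≤ ‖y' p - x p‖ + ‖x p - z‖ := norm_add_le _ _
        have h2 : ‖y' p - x p‖ ≤ 1 := by
          have := norm_le_pi_norm (y' - x) p
          rw [Pi.sub_apply] at this
          have hlt : ‖y' - x‖ < 1 := by rw [← dist_eq_norm]; exact Metric.mem_ball.mp hy'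
          linarith
        have h3 : ‖x p - z‖ ≤ C₀ + R :=
          le_trans (norm_sub_le _ _) (add_le_add (hC₀ p) (hR z hzD))
        linarith
      have hsq : ‖y p - z‖ ^ 2 - ‖y' p - z‖ ^ 2 =
          (‖y p - z‖ - ‖y' p - z‖) * (‖y p - z‖ + ‖y' p - z‖) := by ring
      rw [hsq, abs_mul]
      have hsum0 : 0 ≤ ‖y p - z‖ + ‖y' p - z‖ := by positivity
      rw [abs_of_nonneg hsum0]
      calc |‖y p - z‖ - ‖y' p - z‖| * (‖y p - z‖ + ‖y' p - z‖)
          ≤ dist y y' * K := by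
            refine mul_le_mul hab (by rw [hKdef]; linarith) hsum0 dist_nonneg
        _ = K * dist y y' := by ring
    calc |F y z - F y' z|
        = |(Finset.univ.inf' hne fun p => ‖y p - z‖ ^ 2) -
            (Finset.univ.inf' hne fun p => ‖y' p - z‖ ^ 2)| * |φ z| := by
          rw [hF]; dsimp only; rw [← sub_mul, abs_mul]
      _ ≤ (K * dist y y') * |φ z| := mul_le_mul_of_nonneg_right key (abs_nonneg _)
      _ = K * |φ z| * dist y y' := by ring
  -- a.e. differentiability
  have h_diff : ∀ᵐ z ∂(volume.restrict D), HasFDerivAt (fun y => F y z) (F' z) x := by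
    refine ae_restrict_of_ae ?_
    filter_upwards [measure_eq_zero_iff_ae_notMem.mp (hZgen x hdist)] with z hz
    obtain ⟨p₀, -, hmin⟩ := Finset.exists_min_image Finset.univ (fun p => ‖x p - z‖) hne
    have hstrict : ∀ r, r ≠ p₀ → ‖x p₀ - z‖ < ‖x r - z‖ := fun r hr =>
      lt_of_le_of_ne (hmin r (Finset.mem_univ r)) fun he => hz ⟨p₀, r, Ne.symm hr, he⟩
    have hA0 : z ∈ A p₀ := hstrict
    have hnotA : ∀ r, r ≠ p₀ → z ∉ A r := fun r hr hzr =>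
      absurd (hzr p₀ (Ne.symm hr)) (not_lt.mpr (hmin r (Finset.mem_univ r)))
    have hFz : F' z = Lf p₀ z := by
      rw [hF'def]; dsimp only
      rw [Finset.sum_eq_single p₀
        (fun r _ hr => Set.indicator_of_notMem (hnotA r hr) _)
        (fun h => absurd (Finset.mem_univ p₀) h),
        Set.indicator_of_mem hA0]
    have hp0 : HasFDerivAt (fun y : Fin N → EuclideanSpace ℝ (Fin n) => y p₀)
        (Pr p₀) x := by exact (Pr p₀).hasFDerivAt
    have hproj : HasFDerivAt (fun y : Fin N → EuclideanSpace ℝ (Fin n) => y p₀ - z)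
        (Pr p₀) x := hp0.sub_const z
    have h1 : HasFDerivAt (fun y : Fin N → EuclideanSpace ℝ (Fin n) => ‖y p₀ - z‖ ^ 2)
        (2 • (innerSL ℝ (x p₀ - z)).comp (Pr p₀)) x := hproj.norm_sq
    have h2 := h1.mul_const (φ z)
    have hCLM : (φ z) • (2 • (innerSL ℝ (x p₀ - z)).comp (Pr p₀))
        = Lf p₀ z := by
      rw [hLfdef]
      ext w
      simp only [ContinuousLinearMap.smul_apply, ContinuousLinearMap.comp_apply,
        ContinuousLinearMap.proj_apply, innerSL_apply_apply, smul_eq_mul]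
      ring
    rw [hCLM] at h2
    have hev : (fun y => F y z) =ᶠ[nhds x]
        fun y => ‖y p₀ - z‖ ^ 2 * φ z := by
      have hU : IsOpen {y : Fin N → EuclideanSpace ℝ (Fin n) |
          ∀ r, r ≠ p₀ → ‖y p₀ - z‖ < ‖y r - z‖} := by
        have : {y : Fin N → EuclideanSpace ℝ (Fin n) |
            ∀ r, r ≠ p₀ → ‖y p₀ - z‖ < ‖y r - z‖} =
            ⋂ r, ⋂ (_ : r ≠ p₀), {y | ‖y p₀ - z‖ < ‖y r - z‖} := by
          ext w; simp [Set.mem_iInter]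
        rw [this]
        exact isOpen_iInter_of_finite fun r => isOpen_iInter_of_finite fun _ =>
          isOpen_lt (((continuous_apply p₀).sub continuous_const).norm)
            (((continuous_apply r).sub continuous_const).norm)
      filter_upwards [hU.mem_nhds hstrict] with y hy
      have hinf : (Finset.univ.inf' hne fun p => ‖y p - z‖ ^ 2) = ‖y p₀ - z‖ ^ 2 := by
        refine le_antisymm (Finset.inf'_le _ (Finset.mem_univ p₀))
          (Finset.le_inf' _ _ fun r _ => ?_)
        rcases eq_or_ne r p₀ with rfl | hr
        · exact le_refl _
        · exact pow_le_pow_left₀ (norm_nonneg _) (hy r hr).le 2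
      rw [hF]; dsimp only; rw [hinf]
    rw [hFz]
    exact h2.congr_of_eventuallyEq hev
  obtain ⟨hF'int, hderiv⟩ := hasFDerivAt_integral_of_dominated_loc_of_lip
    (μ := volume.restrict D) (bound := fun z => K * |φ z|) (Metric.ball_mem_nhds x one_pos)
    hFmeas hFint hF'meas h_lip hbound_int h_diff
  -- pass from the inf'-integral to locCost via local equality
  have hWopen : IsOpen {y : Fin N → EuclideanSpace ℝ (Fin n) | ∀ p r, p ≠ r → y p ≠ y r} := by
    have : {y : Fin N → EuclideanSpace ℝ (Fin n) | ∀ p r, p ≠ r → y p ≠ y r} =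
        ⋂ p, ⋂ r, ⋂ (_ : p ≠ r), {y | y p ≠ y r} := by
      ext w; simp [Set.mem_iInter]
    rw [this]
    refine isOpen_iInter_of_finite fun p => isOpen_iInter_of_finite fun r =>
      isOpen_iInter_of_finite fun _ => ?_
    have : {y : Fin N → EuclideanSpace ℝ (Fin n) | y p ≠ y r} =
        (fun y : Fin N → EuclideanSpace ℝ (Fin n) => y p - y r) ⁻¹' ({0}ᶜ) := by
      ext w; simp [sub_eq_zero]
    rw [this]
    exact isOpen_compl_singleton.preimage ((continuous_apply p).sub (continuous_apply r))
  have hevent : locCost D φ =ᶠ[nhds x] fun y => ∫ z in D, F y z :=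
    Filter.eventually_of_mem (hWopen.mem_nhds hdist) fun y hy => hloc y hy
  have hlocHas : HasFDerivAt (locCost D φ) (∫ z in D, F' z) x :=
    hderiv.congr_of_eventuallyEq hevent
  refine ⟨hlocHas.differentiableAt, fun q v => ?_⟩
  rw [hlocHas.fderiv]
  -- evaluate the derivative at Pi.single q v
  have e1 : (∫ z in D, F' z) (Pi.single q v) = ∫ z in D, F' z (Pi.single q v) :=
    ContinuousLinearMap.integral_apply hF'int _
  have e2 : ∀ z, F' z (Pi.single q v) =
      Set.indicator (A q) (fun z => 2 * ⟪x q - z, v⟫ * φ z) z := by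
    intro z
    rw [hF'def]; dsimp only
    rw [ContinuousLinearMap.sum_apply]
    rw [Finset.sum_eq_single q ?_ (fun h => absurd (Finset.mem_univ q) h)]
    · by_cases hz : z ∈ A q
      · rw [Set.indicator_of_mem hz, Set.indicator_of_mem hz, hLfdef]
        simp only [hPrdef, ContinuousLinearMap.smul_apply, ContinuousLinearMap.comp_apply,
          ContinuousLinearMap.proj_apply, innerSL_apply_apply, smul_eq_mul, Pi.single_eq_same]
        ring
      · rw [Set.indicator_of_notMem hz, Set.indicator_of_notMem hz,
          ContinuousLinearMap.zero_apply]
    · intro p _ hpq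
      by_cases hz : z ∈ A p
      · rw [Set.indicator_of_mem hz, hLfdef]
        simp only [hPrdef, ContinuousLinearMap.smul_apply, ContinuousLinearMap.comp_apply,
          ContinuousLinearMap.proj_apply, innerSL_apply_apply, smul_eq_mul,
          Pi.single_eq_of_ne hpq, inner_zero_right, mul_zero]
      · rw [Set.indicator_of_notMem hz, ContinuousLinearMap.zero_apply]
  have e3 : ∫ z in D, Set.indicator (A q) (fun z => 2 * ⟪x q - z, v⟫ * φ z) z =
      ∫ z in VCell D x q, 2 * ⟪x q - z, v⟫ * φ z := by
    rw [setIntegral_indicator (hAopen q).measurableSet]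
    refine setIntegral_congr_set ?_
    rw [MeasureTheory.ae_eq_set]
    constructor
    · have hsub : D ∩ A q ⊆ VCell D x q :=
        fun z hz => ⟨hz.1, fun r hr => (hz.2 r hr).le⟩
      rw [Set.diff_eq_empty.mpr hsub]; exact measure_empty
    · refine measure_mono_null ?_ (hZgen x hdist)
      rintro z ⟨hzV, hzn⟩
      have hzD := hzV.1
      have hnA : z ∉ A q := fun h => hzn ⟨hzD, h⟩
      simp only [hAdef, Set.mem_setOf_eq, not_forall, not_lt] at hnA
      obtain ⟨r, hr, hle⟩ := hnA
      exact ⟨q, r, Ne.symm hr, le_antisymm (hzV.2 r hr) hle⟩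
  have hfirst : (∫ z in D, F' z) (Pi.single q v) =
      ∫ z in VCell D x q, 2 * ⟪x q - z, v⟫ * φ z := by
    rw [e1, integral_congr_ae (Filter.Eventually.of_forall e2), e3]
  refine ⟨hfirst, ?_⟩
  rw [hfirst]
  -- relate the integral to the mass/centroid form
  have hVcomp : IsCompact (VCell D x q) :=
    hDcomp.of_isClosed_subset (hVclosed x q) (hVsub x q)
  have hφV : IntegrableOn φ (VCell D x q) :=
    (hφ.mono (hVsub x q)).integrableOn_compact hVcomp
  have hφzV : IntegrableOn (fun z => φ z • z) (VCell D x q) :=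
    ((hφ.mono (hVsub x q)).smul continuousOn_id).integrableOn_compact hVcomp
  -- positivity of the mass
  have hmpos : 0 < vMass D φ x q := by
    obtain ⟨ρ₂, hρ₂pos, hρ₂⟩ := Metric.isOpen_iff.mp isOpen_interior (x q) (hxD q)
    have hSne : (Finset.univ.erase q).Nonempty := by
      rw [← Finset.card_pos, Finset.card_erase_of_mem (Finset.mem_univ q),
        Finset.card_univ, Fintype.card_fin]
      omega
    set δ := (Finset.univ.erase q).inf' hSne fun r => ‖x r - x q‖ with hδdef
    have hδpos : 0 < δ := by
      rw [hδdef, Finset.lt_inf'_iff]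
      exact fun r hr => norm_sub_pos_iff.mpr (hdist r q (Finset.ne_of_mem_erase hr))
    have hφc : ContinuousAt φ (x q) :=
      hφ.continuousAt (mem_interior_iff_mem_nhds.mp (hxD q))
    have hhalf : φ (x q) / 2 < φ (x q) := by
      have := hφpos (x q) (interior_subset (hxD q)); linarith
    have hφev : ∀ᶠ w in nhds (x q), φ (x q) / 2 < φ w :=
      hφc.eventually (eventually_gt_nhds hhalf)
    obtain ⟨r₀, hr₀pos, hr₀⟩ := Metric.eventually_nhds_iff_ball.mp hφev
    set ρ := min (min ρ₂ r₀) (δ / 2) with hρdef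
    have hρpos : 0 < ρ := lt_min (lt_min hρ₂pos hr₀pos) (by linarith)
    have hballV : Metric.ball (x q) ρ ⊆ VCell D x q := by
      intro z hz
      have hzd : dist z (x q) < ρ := Metric.mem_ball.mp hz
      refine ⟨interior_subset (hρ₂ (Metric.mem_ball.mpr
        (lt_of_lt_of_le hzd (le_trans (min_le_left _ _) (min_le_left _ _))))), ?_⟩
      intro r hr
      have h4 : ‖z - x q‖ < δ / 2 := by
        rw [← dist_eq_norm]
        exact lt_of_lt_of_le hzd (min_le_right _ _)
      have h1 : ‖x q - z‖ < δ / 2 := by rw [norm_sub_rev]; exact h4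
      have h2 : δ ≤ ‖x r - x q‖ :=
        Finset.inf'_le _ (Finset.mem_erase.mpr ⟨hr, Finset.mem_univ r⟩)
      have h3 : ‖x r - x q‖ ≤ ‖x r - z‖ + ‖z - x q‖ := by
        calc ‖x r - x q‖ = ‖(x r - z) + (z - x q)‖ := by abel_nf
        _ ≤ ‖x r - z‖ + ‖z - x q‖ := norm_add_le _ _
      linarith
    have hbmono : ∫ z in Metric.ball (x q) ρ, φ z ≤ vMass D φ x q := by
      refine setIntegral_mono_set hφV ?_ (HasSubset.Subset.eventuallyLE hballV)
      exact (ae_restrict_iff' (hVmeas x q)).mpr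
        (Filter.Eventually.of_forall fun z hzV => (hφpos z (hVsub x q hzV)).le)
    have hlow : (volume (Metric.ball (x q) ρ)).toReal * (φ (x q) / 2)
        ≤ ∫ z in Metric.ball (x q) ρ, φ z := by
      have hconst : ∫ _ in Metric.ball (x q) ρ, (φ (x q) / 2) =
          (volume (Metric.ball (x q) ρ)).toReal * (φ (x q) / 2) := by
        rw [setIntegral_const, smul_eq_mul, measureReal_def]
      rw [← hconst]
      refine setIntegral_mono_on (integrableOn_const measure_ball_lt_top.ne)
        (hφV.mono_set hballV) measurableSet_ball fun z hz => ?_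
      have : dist z (x q) < r₀ := lt_of_lt_of_le (Metric.mem_ball.mp hz)
        (le_trans (min_le_left _ _) (min_le_right _ _))
      exact (hr₀ z (Metric.mem_ball.mpr this)).le
    have hvolpos : 0 < (volume (Metric.ball (x q) ρ)).toReal :=
      ENNReal.toReal_pos (Metric.measure_ball_pos volume _ hρpos).ne' measure_ball_lt_top.ne
    have : 0 < (volume (Metric.ball (x q) ρ)).toReal * (φ (x q) / 2) := by
      have := hφpos (x q) (interior_subset (hxD q))
      positivity
    linarith
  -- final algebraic identity
  have hfint : IntegrableOn (fun z => (2 * φ z) • (x q - z)) (VCell D x q) :=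
    ((continuousOn_const.mul (hφ.mono (hVsub x q))).smul
      (continuousOn_const.sub continuousOn_id)).integrableOn_compact hVcomp
  have h1 : ∀ z : EuclideanSpace ℝ (Fin n),
      2 * ⟪x q - z, v⟫ * φ z = ⟪v, (2 * φ z) • (x q - z)⟫ := by
    intro z; rw [real_inner_smul_right, real_inner_comm]; ring
  rw [integral_congr_ae (Filter.Eventually.of_forall fun z => h1 z)]
  rw [integral_inner hfint v]
  have h2 : (∫ z in VCell D x q, (2 * φ z) • (x q - z)) =
      (2 * vMass D φ x q) • x q - (2:ℝ) • ∫ z in VCell D x q, φ z • z := by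
    have hsplit : ∀ z : EuclideanSpace ℝ (Fin n),
        (2 * φ z) • (x q - z) = (2 * φ z) • x q - (2:ℝ) • (φ z • z) := by
      intro z
      rw [smul_sub, smul_smul]
    have hb : IntegrableOn (fun z => (2:ℝ) • (φ z • z)) (VCell D x q) :=
      (continuousOn_const.fun_smul ((hφ.mono (hVsub x q)).fun_smul
        continuousOn_id)).integrableOn_compact hVcomp
    rw [show (fun z : EuclideanSpace ℝ (Fin n) => (2 * φ z) • (x q - z)) =
        fun z => (2 * φ z) • x q - (2:ℝ) • (φ z • z) from funext hsplit]
    rw [integral_sub ((hφV.const_mul 2).smul_const (x q)) hb,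
      integral_smul_const, integral_smul, integral_const_mul]
    rfl
  have hmc : vMass D φ x q • vCentroid D φ x q = ∫ z in VCell D x q, φ z • z := by
    rw [vCentroid, smul_smul, mul_inv_cancel₀ hmpos.ne', one_smul]
  rw [h2, ← hmc]
  simp only [inner_sub_right, inner_sub_left, real_inner_smul_right, real_inner_smul_left]
  rw [real_inner_comm v (x q), real_inner_comm v (vCentroid D φ x q)]
  ring
end
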